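/- arXiv:1104.3350 — 2 statements merged into one kernel-verified Lean document; each statement's English description precedes it below -/
import Mathlib

section
/- Let l be a prime number, A an abelian group, and B ⊆ A a subgroup with B + lA = A. Then for every integer n ≥ 1 and every b ∈ B with b ∈ l^n A, there exists c ∈ B with c ∈ l^{n+1} A and b − c ∈ l^n B. (Equivalently: the transition maps between the kernels of the surjections B/l^n B → A/l^n A are surjective.) -/
theorem stmt5_general (l : ℕ) (A : Type*) [AddCommGroup A] (B : AddSubgroup A)
    (hB : ∀ a : A, ∃ b ∈ B, ∃ c : A, a = b + l • c) (n : ℕ)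
    (b : A) (hbB : b ∈ B) (hbA : ∃ a : A, b = l ^ n • a) :
    ∃ c ∈ B, (∃ a : A, c = l ^ (n + 1) • a) ∧ ∃ b' ∈ B, b - c = l ^ n • b' := by
  obtain ⟨a, rfl⟩ := hbA
  obtain ⟨b₁, hb₁, c, rfl⟩ := hB a
  refine ⟨l ^ n • (b₁ + l • c) - l ^ n • b₁, B.sub_mem hbB (B.nsmul_mem hb₁ _), ⟨c, ?_⟩,
    b₁, hb₁, sub_sub_cancel _ _⟩
  rw [smul_add, add_sub_cancel_left, smul_smul, pow_succ]

/-- Let `l` be a prime, `A` an abelian group, `B ⊆ A` a subgroup with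
`B + lA = A`. Then for every `n ≥ 1` and every `b ∈ B` with `b ∈ l^n A`, there is `c ∈ B`
with `c ∈ l^{n+1} A` and `b - c ∈ l^n B`.  (This is the surjectivity of the transition maps
between the kernels of the surjections `B/l^n B → A/l^n A`.) -/
theorem stmt5 (l : ℕ) (hl : l.Prime) (A : Type*) [AddCommGroup A] (B : AddSubgroup A)
    (hB : ∀ a : A, ∃ b ∈ B, ∃ c : A, a = b + l • c) (n : ℕ) (hn : 1 ≤ n)
    (b : A) (hbB : b ∈ B) (hbA : ∃ a : A, b = l ^ n • a) :
    ∃ c ∈ B, (∃ a : A, c = l ^ (n + 1) • a) ∧ ∃ b' ∈ B, b - c = l ^ n • b' :=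
  stmt5_general l A B hB n b hbB hbA
end

section
/- Let l be a prime number and ℤ_l the ring of l-adic integers. Let H be a ℤ_l-module with no l-torsion (l·x = 0 implies x = 0), let N' be a ℤ_l-module, and let β : H × N' → ℤ_l be a ℤ_l-bilinear map. Let N ⊆ H be a ℤ_l-submodule such that (i) for every x ∈ H there is an integer k ≥ 0 with l^k·x ∈ N, and (ii) the ℤ_l-linear map N → Hom_{ℤ_l}(N', ℤ_l) sending y to β(y, −) is bijective. Then N = H. -/
/-!
If `f : M → P` is injective on `N` and `f(M) ⊆ f(N)`, then `N` is saturated with respect to any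
`M`-regular scalar `r`: for `r • x ∈ N`, pick `y ∈ N` with `f y = f x`; then `r • x` and `r • y`
are elements of `N` with the same image, so they agree, and cancelling `r` gives `x = y ∈ N`.
Applied with `r = l ^ k`, this makes every element of `H` lie in `N`.
-/

namespace Submodule

variable {R M P : Type*} [Semiring R] [AddCommMonoid M] [AddCommMonoid P] [Module R M]
  [Module R P] (N : Submodule R M) (f : M →ₗ[R] P)

theorem mem_of_smul_mem_of_injective_of_range_le (hinj : Function.Injective (f ∘ₗ N.subtype))
    (hrange : LinearMap.range f ≤ LinearMap.range (f ∘ₗ N.subtype)) {r : R}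
    (hr : IsSMulRegular M r) {x : M} (hx : r • x ∈ N) : x ∈ N := by
  obtain ⟨y, hy⟩ := hrange (LinearMap.mem_range_self f x)
  have hxy : (⟨r • x, hx⟩ : N) = r • y :=
    hinj <| by simp only [LinearMap.comp_apply, subtype_apply, map_smul, hy]
  have : r • x = r • (y : M) := congrArg Subtype.val hxy
  exact hr this ▸ y.2

theorem eq_top_of_injective_of_range_le (hinj : Function.Injective (f ∘ₗ N.subtype))
    (hrange : LinearMap.range f ≤ LinearMap.range (f ∘ₗ N.subtype)) {r : R}
    (hr : IsSMulRegular M r) (hpow : ∀ x : M, ∃ k : ℕ, r ^ k • x ∈ N) : N = ⊤ := by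
  refine eq_top_iff.mpr fun x _ => ?_
  obtain ⟨k, hk⟩ := hpow x
  exact N.mem_of_smul_mem_of_injective_of_range_le f hinj hrange (hr.pow k) hk

end Submodule

/-- Let `l` be a prime, `H` a `ℤ_l`-module without `l`-torsion, `N'` a
`ℤ_l`-module, `β : H × N' → ℤ_l` a bilinear map, and `N ⊆ H` a submodule such that
(i) every element of `H` has a multiple by a power of `l` lying in `N`, and
(ii) `y ↦ β(y, -)` is a bijection from `N` onto `Hom_{ℤ_l}(N', ℤ_l)`.  Then `N = H`. -/
theorem stmt12 (l : ℕ) [Fact l.Prime] (H N' : Type*) [AddCommGroup H] [AddCommGroup N']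
    [Module ℤ_[l] H] [Module ℤ_[l] N']
    (htf : ∀ x : H, (l : ℤ_[l]) • x = 0 → x = 0)
    (β : H →ₗ[ℤ_[l]] N' →ₗ[ℤ_[l]] ℤ_[l])
    (N : Submodule ℤ_[l] H)
    (hi : ∀ x : H, ∃ k : ℕ, (l : ℤ_[l]) ^ k • x ∈ N)
    (hii : Function.Bijective (β ∘ₗ N.subtype)) :
    N = ⊤ :=
  N.eq_top_of_injective_of_range_le β hii.1 (LinearMap.range_eq_top.mpr hii.2 ▸ le_top)
    (isSMulRegular_iff_right_eq_zero_of_smul.mpr htf) hi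
end
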